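/- Let $(\Omega,\mathcal{F},\mathbb{P})$ be a probability space. Let $U:\Omega\to\mathbb{R}^3$ be a measurable random position, $\mathcal{G}\subseteq\mathbb{R}^3$ a measurable set, and set $\varepsilon=\mathbb{P}(U\notin\mathcal{G})$. Let $F:\Omega\to\mathbb{R}$ be a nonnegative measurable random variable with $\delta=\mathbb{P}(F\le G_0)$ for some $G_0>0$. Let $A^2:\mathbb{R}^3\to\mathbb{R}$ and $\beta:\mathbb{R}^3\to\mathbb{R}$ be functions, and suppose there are constants $A_0>0$ and $\beta_{\min}>0$ such that $A^2(x)\ge A_0$ and $\beta(x)\ge\beta_{\min}$ for every $x\in\mathcal{G}$. Let $\sigma^2>0$, $N\ge 1$, $\gamma_0>0$, and define the average SNR $\hat{\gamma}(\omega)=\frac{P}{\sigma^2}\beta(U(\omega))N^2A^2(U(\omega))$ and the instantaneous SNR $\gamma=\hat{\gamma}\cdot F$. Then for every transmit power $P\ge \frac{\sigma^2\gamma_0}{N^2 G_0 A_0 \beta_{\min}}$, one has $\mathbb{P}(\gamma<\gamma_0)\le\delta+\varepsilon$. (Theorem 2 of the paper.) -/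
import Mathlib


open MeasureTheory
open scoped ENNReal

/-- Theorem 2 of the paper: if the transmit power satisfies
`P ≥ σ²γ₀ / (N² G₀ A₀ β_min)`, then the outage probability is at most `δ + ε`,
where `δ = ℙ(F ≤ G₀)` is the deep-fade probability and
`ε = ℙ(U ∉ 𝒢)` is the probability that the UE lies outside the illuminated region. -/
theorem power_control_outage_bound
    {Ω : Type*} [MeasurableSpace Ω] (μ : Measure Ω) [IsProbabilityMeasure μ]
    (U : Ω → EuclideanSpace ℝ (Fin 3)) (hU : Measurable U)
    (G : Set (EuclideanSpace ℝ (Fin 3))) (hG : MeasurableSet G)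
    (F : Ω → ℝ) (hF : Measurable F) (hF_nn : ∀ ω, 0 ≤ F ω)
    (G0 : ℝ) (hG0 : 0 < G0)
    (δ : ℝ≥0∞) (hδ : δ = μ {ω | F ω ≤ G0})
    (ε : ℝ≥0∞) (hε : ε = μ {ω | U ω ∉ G})
    (A2 β : EuclideanSpace ℝ (Fin 3) → ℝ)
    (A0 βmin : ℝ) (hA0 : 0 < A0) (hβmin : 0 < βmin)
    (hA2 : ∀ x ∈ G, A0 ≤ A2 x) (hβ : ∀ x ∈ G, βmin ≤ β x)
    (σ2 : ℝ) (hσ2 : 0 < σ2) (N : ℕ) (hN : 1 ≤ N) (γ0 : ℝ) (hγ0 : 0 < γ0)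
    (P : ℝ) (hP : σ2 * γ0 / ((N : ℝ) ^ 2 * G0 * A0 * βmin) ≤ P) :
    μ {ω | (P / σ2 * β (U ω) * (N : ℝ) ^ 2 * A2 (U ω)) * F ω < γ0} ≤ δ + ε := by
  have hNpos : (0:ℝ) < (N:ℝ)^2 := by positivity
  have hsub : {ω | (P / σ2 * β (U ω) * (N : ℝ) ^ 2 * A2 (U ω)) * F ω < γ0} ⊆
      {ω | F ω ≤ G0} ∪ {ω | U ω ∉ G} := by
    intro ω hω
    by_contra hcon
    simp only [Set.mem_union, Set.mem_setOf_eq, not_or, not_le, not_not] at hcon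
    obtain ⟨hFω, hUω⟩ := hcon
    have hβx := hβ _ hUω
    have hA2x := hA2 _ hUω
    have hPpos : 0 < P := lt_of_lt_of_le (by positivity) hP
    have hβpos : 0 < β (U ω) := hβmin.trans_le hβx
    have hA2pos : 0 < A2 (U ω) := hA0.trans_le hA2x
    have hPσ : 0 < P / σ2 := by positivity
    have key : γ0 ≤ (P / σ2 * βmin * (N : ℝ) ^ 2 * A0) * G0 := by
      have h1 : σ2 * γ0 / ((N : ℝ) ^ 2 * G0 * A0 * βmin) * ((N : ℝ) ^ 2 * G0 * A0 * βmin) ≤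
          P * ((N : ℝ) ^ 2 * G0 * A0 * βmin) :=
        mul_le_mul_of_nonneg_right hP (by positivity)
      rw [div_mul_cancel₀ _ (by positivity)] at h1
      rw [show (P / σ2 * βmin * (N : ℝ) ^ 2 * A0) * G0
            = P * ((N : ℝ) ^ 2 * G0 * A0 * βmin) / σ2 by ring, le_div_iff₀ hσ2]
      linarith
    have chain : (P / σ2 * βmin * (N : ℝ) ^ 2 * A0) * G0 ≤
        (P / σ2 * β (U ω) * (N : ℝ) ^ 2 * A2 (U ω)) * F ω := by
      have s1 : P / σ2 * βmin ≤ P / σ2 * β (U ω) :=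
        mul_le_mul_of_nonneg_left hβx hPσ.le
      have s2 : P / σ2 * βmin * (N : ℝ) ^ 2 ≤ P / σ2 * β (U ω) * (N : ℝ) ^ 2 :=
        mul_le_mul_of_nonneg_right s1 hNpos.le
      have n2 : 0 ≤ P / σ2 * β (U ω) * (N : ℝ) ^ 2 :=
        mul_nonneg (mul_nonneg hPσ.le hβpos.le) hNpos.le
      have s3 := mul_le_mul s2 hA2x hA0.le n2
      exact mul_le_mul s3 hFω.le hG0.le (mul_nonneg n2 hA2pos.le)
    exact absurd hω (not_lt.mpr (key.trans chain))
  calc μ {ω | (P / σ2 * β (U ω) * (N : ℝ) ^ 2 * A2 (U ω)) * F ω < γ0}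
      ≤ μ ({ω | F ω ≤ G0} ∪ {ω | U ω ∉ G}) := measure_mono hsub
    _ ≤ μ {ω | F ω ≤ G0} + μ {ω | U ω ∉ G} := measure_union_le _ _
    _ = δ + ε := by rw [hδ, hε]
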